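/- arXiv:2101.05394 — 4 statements merged into one kernel-verified Lean document; each statement's English description precedes it below -/
import Mathlib

section
/- Let d be a positive integer and let τ, α, ν > 0. Define F_{τ,α,ν}(θ) = (1/B(α,ν)) ∫₀¹ ((1-δ)/(1-δ cos θ))^τ δ^{α-1} (1-δ)^{ν-1} dδ for θ ∈ [0,π]. Then the kernel K(x,y) = F_{τ,α,ν}(arccos⟨x,y⟩) is positive semidefinite on the unit sphere of ℝ^{d+1}: for every positive integer m, every points x_1,…,x_m on the unit sphere of ℝ^{d+1} and every reals c_1,…,c_m, one has Σ_{i=1}^m Σ_{j=1}^m c_i c_j F_{τ,α,ν}(arccos⟨x_i,x_j⟩) ≥ 0. -/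
open Real MeasureTheory

/-- Euler Beta function `B(a,b) = Γ(a)Γ(b)/Γ(a+b)`. -/
noncomputable def betaFn (a b : ℝ) : ℝ := Real.Gamma a * Real.Gamma b / Real.Gamma (a + b)

/-- The `F`-family correlation function
`F_{τ,α,ν}(θ) = (1/B(α,ν)) ∫₀¹ ((1-δ)/(1-δ cos θ))^τ δ^{α-1} (1-δ)^{ν-1} dδ`. -/
noncomputable def Ffam (τ α ν θ : ℝ) : ℝ :=
  (1 / betaFn α ν) * ∫ δ in Set.Ioo (0:ℝ) 1,
    ((1 - δ) / (1 - δ * Real.cos θ)) ^ τ * δ ^ (α - 1) * (1 - δ) ^ (ν - 1)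

/-!
Since `r ^ (-τ) = Γ(τ)⁻¹ ∫₀^∞ t ^ (τ - 1) e ^ (-r t) dt`, the kernel `(1 - δ ⟨x, y⟩) ^ (-τ)`
is a nonnegative mixture of the kernels `exp (δ t ⟨x, y⟩)`. These are positive semidefinite:
their power series are nonnegative combinations of the Hadamard powers of the Gram matrix,
which are positive semidefinite by the Schur product theorem. Integrating once more against
the nonnegative weight `(1 - δ) ^ τ δ ^ (α - 1) (1 - δ) ^ (ν - 1)` on `(0, 1)` gives
`B(α, ν) F_{τ,α,ν}(arccos ⟨x, y⟩)`.
-/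

open Set Matrix

lemma integrableOn_rpow_mul_one_sub_rpow {α ν : ℝ} (hα : 0 < α) (hν : 0 < ν) :
    IntegrableOn (fun δ : ℝ ↦ δ ^ (α - 1) * (1 - δ) ^ (ν - 1)) (Ioo 0 1) := by
  have h := Complex.betaIntegral_convergent (u := α) (v := ν) (by simpa) (by simpa)
  rw [intervalIntegrable_iff_integrableOn_Ioo_of_le zero_le_one] at h
  refine IntegrableOn.congr_fun h.re (fun δ hδ ↦ ?_) measurableSet_Ioo
  have h1 : (0 : ℝ) ≤ 1 - δ := by linarith [hδ.2]
  rw [RCLike.re_to_complex, ← Complex.ofReal_one, ← Complex.ofReal_sub, ← Complex.ofReal_sub,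
    ← Complex.ofReal_sub, ← Complex.ofReal_cpow hδ.1.le, ← Complex.ofReal_cpow h1,
    ← Complex.ofReal_mul, Complex.ofReal_re]

lemma integrableOn_rpow_mul_exp_neg_mul {τ r : ℝ} (hτ : 0 < τ) (hr : 0 < r) :
    IntegrableOn (fun t ↦ t ^ (τ - 1) * exp (-(r * t))) (Ioi 0) := by
  simpa using integrableOn_rpow_mul_exp_neg_mul_rpow (s := τ - 1) (p := 1) (by linarith) one_pos hr

lemma rpow_neg_eq_inv_Gamma_mul_integral {τ r : ℝ} (hτ : 0 < τ) (hr : 0 < r) :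
    r ^ (-τ) = (Gamma τ)⁻¹ * ∫ t in Ioi 0, t ^ (τ - 1) * exp (-(r * t)) := by
  rw [integral_rpow_mul_exp_neg_mul_Ioi hτ hr, one_div, inv_rpow hr.le, rpow_neg hr.le]
  field_simp [(Gamma_pos_of_pos hτ).ne']

lemma integrableOn_Ffam_integrand {τ α ν s : ℝ} (hτ : 0 < τ) (hα : 0 < α) (hν : 0 < ν)
    (hs : s ≤ 1) :
    IntegrableOn (fun δ ↦ ((1 - δ) / (1 - δ * s)) ^ τ * δ ^ (α - 1) * (1 - δ) ^ (ν - 1))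
      (Ioo 0 1) := by
  refine (integrableOn_rpow_mul_one_sub_rpow hα hν).mono'
    (Measurable.aestronglyMeasurable (by fun_prop))
    (ae_restrict_of_forall_mem measurableSet_Ioo fun δ hδ ↦ ?_)
  obtain ⟨hδ0, hδ1⟩ := hδ
  have hden : 1 - δ ≤ 1 - δ * s := by nlinarith
  have hq : (1 - δ) / (1 - δ * s) ≤ 1 := div_le_one_of_le₀ hden (by linarith)
  have hq0 : 0 ≤ (1 - δ) / (1 - δ * s) := div_nonneg (by linarith) (by linarith)
  rw [norm_of_nonneg (by positivity), mul_assoc]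
  exact mul_le_of_le_one_left (by positivity) (rpow_le_one hq0 hq hτ.le)

noncomputable def FfamCos (τ α ν s : ℝ) : ℝ :=
  (1 / betaFn α ν) * ∫ δ in Ioo (0:ℝ) 1,
    ((1 - δ) / (1 - δ * s)) ^ τ * δ ^ (α - 1) * (1 - δ) ^ (ν - 1)

lemma Ffam_eq_FfamCos (τ α ν θ : ℝ) : Ffam τ α ν θ = FfamCos τ α ν (cos θ) := rfl

namespace Matrix.PosSemidef

variable {n : Type*} {A : Matrix n n ℝ}

theorem map_pow [Finite n] (hA : A.PosSemidef) (k : ℕ) : (A.map (· ^ k)).PosSemidef := by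
  induction k with
  | zero =>
    have h : A.map (· ^ 0) = vecMulVec 1 (star 1) := by ext; simp [vecMulVec]
    exact h ▸ posSemidef_vecMulVec_self_star 1
  | succ k ih =>
    have h : A.map (· ^ (k + 1)) = A.map (· ^ k) ⊙ A := by ext; simp [pow_succ]
    exact h ▸ ih.hadamard hA

theorem tsum {B : ℕ → Matrix n n ℝ} (hB : ∀ k, (B k).PosSemidef)
    (hsum : ∀ i j, Summable fun k ↦ B k i j) : (of fun i j ↦ ∑' k, B k i j).PosSemidef := by
  refine ⟨IsHermitian.ext fun i j ↦ ?_, fun x ↦ ?_⟩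
  · simp [← fun k ↦ (hB k).1.apply i j]
  · have hterm : ∀ i j, Summable fun k ↦ star (x i) * B k i j * x j := fun i j ↦
      ((hsum i j).mul_left _).mul_right _
    simp only [Finsupp.sum, of_apply, ← tsum_mul_left, ← tsum_mul_right]
    simp_rw [← Summable.tsum_finsetSum fun _ _ ↦ hterm _ _]
    rw [← Summable.tsum_finsetSum fun _ _ ↦ summable_sum fun _ _ ↦ hterm _ _]
    exact tsum_nonneg fun k ↦ (hB k).2 x

theorem integral {α : Type*} [MeasurableSpace α] {μ : Measure α}
    {B : α → Matrix n n ℝ} (hB : ∀ᵐ t ∂μ, (B t).PosSemidef)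
    (hint : ∀ i j, Integrable (fun t ↦ B t i j) μ) :
    (of fun i j ↦ ∫ t, B t i j ∂μ).PosSemidef := by
  refine ⟨IsHermitian.ext fun i j ↦ ?_, fun x ↦ ?_⟩
  · simp only [of_apply, star_trivial]
    exact integral_congr_ae (hB.mono fun t ht ↦ by simpa using ht.1.apply i j)
  · have hterm : ∀ i j, Integrable (fun t ↦ star (x i) * B t i j * x j) μ :=
      fun i j ↦ ((hint i j).const_mul _).mul_const _
    simp only [Finsupp.sum, of_apply, ← integral_const_mul, ← integral_mul_const]
    simp_rw [← integral_finsetSum _ fun _ _ ↦ hterm _ _]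
    rw [← integral_finsetSum _ fun _ _ ↦ integrable_finsetSum _ fun _ _ ↦ hterm _ _]
    exact integral_nonneg_of_ae (hB.mono fun t ht ↦ ht.2 x)

theorem map_exp_mul [Finite n] (hA : A.PosSemidef) {t : ℝ} (ht : 0 ≤ t) :
    (A.map fun s ↦ exp (t * s)).PosSemidef := by
  have h : A.map (fun s ↦ exp (t * s)) =
      of fun i j ↦ ∑' k : ℕ, ((t ^ k / k.factorial) • A.map (· ^ k)) i j := by
    ext i j
    simp only [map_apply, of_apply, smul_apply, smul_eq_mul, exp_eq_exp_ℝ,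
      NormedSpace.exp_eq_tsum_div]
    exact tsum_congr fun k ↦ by ring
  rw [h]
  refine tsum (fun k ↦ (hA.map_pow k).smul (by positivity)) fun i j ↦ ?_
  simpa [mul_pow, div_mul_eq_mul_div] using summable_pow_div_factorial (t * A i j)

theorem map_one_sub_mul_rpow_neg [Finite n] (hA : A.PosSemidef) {δ τ : ℝ} (hδ : 0 ≤ δ)
    (hτ : 0 < τ) (hAδ : ∀ i j, δ * A i j < 1) :
    (A.map fun s ↦ (1 - δ * s) ^ (-τ)).PosSemidef := by
  set B : ℝ → Matrix n n ℝ := fun t ↦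
    ((Gamma τ)⁻¹ * (t ^ (τ - 1) * exp (-t))) • A.map fun s ↦ exp (δ * t * s)
  have hB : ∀ t i j, B t i j = (Gamma τ)⁻¹ * (t ^ (τ - 1) * exp (-((1 - δ * A i j) * t))) := by
    intro t i j
    simp only [B, smul_apply, map_apply, smul_eq_mul]
    rw [show -((1 - δ * A i j) * t) = -t + δ * t * A i j by ring, exp_add]
    ring
  have h : A.map (fun s ↦ (1 - δ * s) ^ (-τ)) = of fun i j ↦ ∫ t in Ioi 0, B t i j := by
    ext i j
    simp only [map_apply, of_apply, hB, integral_const_mul]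
    exact rpow_neg_eq_inv_Gamma_mul_integral hτ (sub_pos.2 (hAδ i j))
  rw [h]
  refine integral (ae_restrict_of_forall_mem measurableSet_Ioi fun t ht ↦ ?_) fun i j ↦ ?_
  · have ht : 0 < t := ht
    exact (hA.map_exp_mul (by positivity)).smul (by have := Gamma_pos_of_pos hτ; positivity)
  · simp only [hB]
    exact (integrableOn_rpow_mul_exp_neg_mul hτ (sub_pos.2 (hAδ i j))).const_mul _

theorem map_FfamCos [Finite n] (hA : A.PosSemidef) (hA1 : ∀ i j, A i j ≤ 1) {τ α ν : ℝ}
    (hτ : 0 < τ) (hα : 0 < α) (hν : 0 < ν) : (A.map (FfamCos τ α ν)).PosSemidef := by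
  set B : ℝ → Matrix n n ℝ := fun δ ↦
    of fun i j ↦ ((1 - δ) / (1 - δ * A i j)) ^ τ * δ ^ (α - 1) * (1 - δ) ^ (ν - 1)
  have hB : ∀ δ ∈ Ioo (0:ℝ) 1, (B δ).PosSemidef := by
    rintro δ ⟨hδ0, hδ1⟩
    have hAδ : ∀ i j, δ * A i j < 1 := fun i j ↦ by nlinarith [hA1 i j]
    have h : B δ = ((1 - δ) ^ τ * δ ^ (α - 1) * (1 - δ) ^ (ν - 1)) •
        A.map fun s ↦ (1 - δ * s) ^ (-τ) := by
      ext i j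
      have hpos : 0 < 1 - δ * A i j := sub_pos.2 (hAδ i j)
      simp only [B, of_apply, smul_apply, map_apply, smul_eq_mul]
      rw [div_rpow (by linarith) hpos.le, rpow_neg hpos.le]
      ring
    rw [h]
    exact (hA.map_one_sub_mul_rpow_neg hδ0.le hτ hAδ).smul (by positivity)
  exact (integral (ae_restrict_of_forall_mem measurableSet_Ioo hB) fun i j ↦
    integrableOn_Ffam_integrand hτ hα hν (hA1 i j)).smul
    (one_div_nonneg.2 (ProbabilityTheory.beta_pos hα hν).le)

end Matrix.PosSemidef

theorem Ffam_posSemidef_general (d : ℕ) (τ α ν : ℝ)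
    (hτ : 0 < τ) (hα : 0 < α) (hν : 0 < ν)
    (m : ℕ) (x : Fin m → EuclideanSpace ℝ (Fin (d + 1)))
    (hx : ∀ i, ‖x i‖ = 1) (c : Fin m → ℝ) :
    0 ≤ ∑ i, ∑ j, c i * c j * Ffam τ α ν (Real.arccos (inner ℝ (x i) (x j))) := by
  have hbound : ∀ i j, |inner ℝ (x i) (x j)| ≤ 1 := fun i j ↦ by
    simpa [hx] using abs_real_inner_le_norm (x i) (x j)
  have hK : (gram ℝ x).map (FfamCos τ α ν) =
      of fun i j ↦ Ffam τ α ν (arccos (inner ℝ (x i) (x j))) := by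
    ext i j
    rw [map_apply, gram_apply, of_apply, Ffam_eq_FfamCos,
      cos_arccos (abs_le.1 (hbound i j)).1 (abs_le.1 (hbound i j)).2]
  have hpsd := (posSemidef_gram ℝ x).map_FfamCos (fun i j ↦ (abs_le.1 (hbound i j)).2) hτ hα hν
  rw [hK] at hpsd
  refine (hpsd.dotProduct_mulVec_nonneg c).trans_eq ?_
  simp only [dotProduct, mulVec, of_apply, star_trivial, Finset.mul_sum]
  exact Finset.sum_congr rfl fun i _ ↦ Finset.sum_congr rfl fun j _ ↦ by ring

/-- The kernel `(x,y) ↦ F_{τ,α,ν}(arccos⟨x,y⟩)` is positive semidefinite on the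
unit sphere of `ℝ^{d+1}`. -/
theorem Ffam_posSemidef (d : ℕ) (hd : 0 < d) (τ α ν : ℝ)
    (hτ : 0 < τ) (hα : 0 < α) (hν : 0 < ν)
    (m : ℕ) (hm : 0 < m) (x : Fin m → EuclideanSpace ℝ (Fin (d + 1)))
    (hx : ∀ i, ‖x i‖ = 1) (c : Fin m → ℝ) :
    0 ≤ ∑ i, ∑ j, c i * c j * Ffam τ α ν (Real.arccos (inner ℝ (x i) (x j))) :=
  Ffam_posSemidef_general d τ α ν hτ hα hν m x hx c
end

section
/- Let τ, α, ν > 0 and define F_{τ,α,ν}(θ) = (1/B(α,ν)) ∫₀¹ ((1-δ)/(1-δ cos θ))^τ δ^{α-1} (1-δ)^{ν-1} dδ. Set b_n = (B(α,ν+τ)/B(α,ν)) · (α)_n (τ)_n / ((α+ν+τ)_n · n!) for n = 0, 1, 2, …. Then each b_n ≥ 0, the series Σ_{n=0}^∞ b_n converges with Σ_{n=0}^∞ b_n = 1, and for every θ ∈ [0,π], F_{τ,α,ν}(θ) = Σ_{n=0}^∞ b_n (cos θ)^n. -/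
open Real MeasureTheory

/-- Pochhammer symbol (rising factorial) `(x)_n = x(x+1)⋯(x+n-1)`. -/
noncomputable def poch (x : ℝ) (n : ℕ) : ℝ := Polynomial.eval x (ascPochhammer ℝ n)

/-- Schoenberg coefficients of the `F`-family:
`b_n = (B(α,ν+τ)/B(α,ν)) (α)_n (τ)_n / ((α+ν+τ)_n n!)`. -/
noncomputable def schoenbergCoeff (τ α ν : ℝ) (n : ℕ) : ℝ :=
  (betaFn α (ν + τ) / betaFn α ν) *
    (poch α n * poch τ n / (poch (α + ν + τ) n * n.factorial))

/-!
Expanding `(1 - δ cos θ)^(-τ)` by the binomial series and integrating term by term against the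
Beta weight `δ^(α-1) (1-δ)^(ν+τ-1)` gives `b_n = (τ)_n / n! · B(α+n, ν+τ) / B(α,ν)`; the
interchange is justified by dominated convergence, the dominating series being the case
`cos θ = 1`, whose sum is the integrand of `B(α,ν)`. The recurrence of `Γ` turns `B(α+n, ν+τ)` into
`B(α, ν+τ) (α)_n / (α+ν+τ)_n`. At `θ = 0` the integrand is the Beta weight itself, so `F = 1`
there and the coefficients sum to one.
-/

open Set

lemma poch_succ (x : ℝ) (n : ℕ) : poch x (n + 1) = poch x n * (x + n) := by
  simp [poch, ascPochhammer_succ_right]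

lemma poch_pos {x : ℝ} (hx : 0 < x) (n : ℕ) : 0 < poch x n :=
  ascPochhammer_pos n x hx

lemma Gamma_add_nat_eq_poch_mul {x : ℝ} (hx : 0 < x) (n : ℕ) :
    Gamma (x + n) = poch x n * Gamma x := by
  induction n with
  | zero => simp [poch]
  | succ n ih =>
    rw [Nat.cast_succ, ← add_assoc, Gamma_add_one (by positivity), ih, poch_succ]
    ring

lemma betaFn_pos {a b : ℝ} (ha : 0 < a) (hb : 0 < b) : 0 < betaFn a b :=
  ProbabilityTheory.beta_pos ha hb

lemma betaFn_add_nat {a b : ℝ} (ha : 0 < a) (hb : 0 < b) (n : ℕ) :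
    betaFn (a + n) b = betaFn a b * poch a n / poch (a + b) n := by
  have hab : 0 < a + b := by positivity
  rw [betaFn, betaFn, add_right_comm, Gamma_add_nat_eq_poch_mul ha,
    Gamma_add_nat_eq_poch_mul hab]
  have := (poch_pos hab n).ne'
  have := (Gamma_pos_of_pos hab).ne'
  field_simp

lemma ring_choose_eq_poch_div_factorial (τ : ℝ) (n : ℕ) :
    Ring.choose (τ + n - 1) n = poch τ n / n.factorial := by
  rw [Ring.choose_eq_smul, Polynomial.descPochhammer_smeval_eq_ascPochhammer,
    Polynomial.ascPochhammer_smeval_eq_eval, poch, smul_eq_mul, inv_mul_eq_div]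
  ring_nf

theorem hasSum_poch_div_factorial_mul_pow (τ : ℝ) {y : ℝ} (hy : |y| < 1) :
    HasSum (fun n : ℕ => poch τ n / n.factorial * y ^ n) ((1 - y) ^ (-τ)) := by
  have h := (one_div_one_sub_rpow_hasFPowerSeriesOnBall_zero τ).hasSum
    (y := y) (by simpa [enorm_eq_nnnorm, ← NNReal.coe_lt_coe] using hy)
  rw [rpow_neg (by linarith [le_abs_self y])]
  simpa [FormalMultilinearSeries.ofScalars_apply_eq, ring_choose_eq_poch_div_factorial, mul_comm]
    using h

theorem setIntegral_rpow_mul_one_sub_rpow {a b : ℝ} (ha : 0 < a) (hb : 0 < b) :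
    ∫ x in Ioo (0:ℝ) 1, x ^ (a - 1) * (1 - x) ^ (b - 1) = betaFn a b := by
  have h := ProbabilityTheory.lintegral_betaPDF_eq_one ha hb
  rw [ProbabilityTheory.lintegral_betaPDF, ← ENNReal.toReal_eq_one_iff,
    ← integral_eq_lintegral_of_nonneg_ae] at h
  · simp_rw [mul_assoc, integral_const_mul] at h
    rw [one_div_mul_eq_div] at h
    exact (div_eq_one_iff_eq (betaFn_pos ha hb).ne').1 h
  · filter_upwards [ae_restrict_mem measurableSet_Ioo] with x hx
    have := betaFn_pos ha hb
    exact mul_nonneg (mul_nonneg (by positivity) (rpow_nonneg hx.1.le _))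
      (rpow_nonneg (sub_nonneg.2 hx.2.le) _)
  · fun_prop

theorem integrableOn_rpow_mul_one_sub_rpow_s1 {a b : ℝ} (ha : 0 < a) (hb : 0 < b) :
    IntegrableOn (fun x : ℝ => x ^ (a - 1) * (1 - x) ^ (b - 1)) (Ioo 0 1) :=
  Integrable.of_integral_ne_zero <| by
    rw [setIntegral_rpow_mul_one_sub_rpow ha hb]
    exact (betaFn_pos ha hb).ne'

theorem hasSum_Ffam_integrand (τ α ν : ℝ) {x δ : ℝ} (hx : |x| ≤ 1) (hδ : δ ∈ Ioo (0:ℝ) 1) :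
    HasSum (fun n : ℕ => poch τ n / n.factorial * (δ * x) ^ n *
        (δ ^ (α - 1) * (1 - δ) ^ (ν + τ - 1)))
      (((1 - δ) / (1 - δ * x)) ^ τ * δ ^ (α - 1) * (1 - δ) ^ (ν - 1)) := by
  obtain ⟨hδ0, hδ1⟩ := hδ
  have hδx : |δ * x| < 1 := by
    rw [abs_mul, abs_of_pos hδ0]; nlinarith [abs_nonneg x]
  have h1δ : 0 < 1 - δ := by linarith
  have h1δx : 0 < 1 - δ * x := by linarith [le_abs_self (δ * x)]
  have hsum : ((1 - δ) / (1 - δ * x)) ^ τ * δ ^ (α - 1) * (1 - δ) ^ (ν - 1)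
      = (1 - δ * x) ^ (-τ) * (δ ^ (α - 1) * (1 - δ) ^ (ν + τ - 1)) := by
    rw [div_rpow h1δ.le h1δx.le, rpow_neg h1δx.le, add_sub_right_comm, rpow_add h1δ]
    field_simp
  rw [hsum]
  exact (hasSum_poch_div_factorial_mul_pow τ hδx).mul_right _

theorem setIntegral_Ffam_term {τ α ν : ℝ} (hα : 0 < α) (hντ : 0 < ν + τ) (x : ℝ) (n : ℕ) :
    ∫ δ in Ioo (0:ℝ) 1, poch τ n / n.factorial * (δ * x) ^ n *
        (δ ^ (α - 1) * (1 - δ) ^ (ν + τ - 1))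
      = poch τ n / n.factorial * x ^ n * betaFn (α + n) (ν + τ) := by
  rw [← setIntegral_rpow_mul_one_sub_rpow (by positivity) hντ, ← integral_const_mul]
  refine setIntegral_congr_fun measurableSet_Ioo fun δ hδ => ?_
  rw [show α + n - 1 = (α - 1) + n by ring, rpow_add hδ.1, rpow_natCast]
  ring

theorem hasSum_integral_Ffam {τ α ν : ℝ} (hτ : 0 < τ) (hα : 0 < α) (hν : 0 < ν) {x : ℝ}
    (hx : |x| ≤ 1) :
    HasSum (fun n : ℕ => poch τ n / n.factorial * x ^ n * betaFn (α + n) (ν + τ))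
      (∫ δ in Ioo (0:ℝ) 1, ((1 - δ) / (1 - δ * x)) ^ τ * δ ^ (α - 1) * (1 - δ) ^ (ν - 1)) := by
  set term : ℝ → ℕ → ℝ → ℝ := fun y n δ =>
    poch τ n / n.factorial * (δ * y) ^ n * (δ ^ (α - 1) * (1 - δ) ^ (ν + τ - 1))
  have hterm : ∀ n, ∫ δ in Ioo (0:ℝ) 1, term x n δ
      = poch τ n / n.factorial * x ^ n * betaFn (α + n) (ν + τ) :=
    setIntegral_Ffam_term hα (by positivity) x
  simp only [← hterm]
  refine hasSum_integral_of_dominated_convergence (term 1) (fun n => by fun_prop)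
    (fun n => ?_) ?_ ?_ ?_
  · filter_upwards [ae_restrict_mem measurableSet_Ioo] with δ ⟨hδ0, hδ1⟩
    have hcoeff : 0 ≤ poch τ n / n.factorial := by have := poch_pos hτ n; positivity
    have hkernel : 0 ≤ δ ^ (α - 1) * (1 - δ) ^ (ν + τ - 1) :=
      mul_nonneg (rpow_nonneg hδ0.le _) (rpow_nonneg (by linarith) _)
    have hδx : |δ * x| ≤ δ * 1 := by rw [abs_mul, abs_of_pos hδ0]; gcongr
    simp only [term]
    rw [Real.norm_eq_abs, abs_mul, abs_mul, abs_of_nonneg hcoeff, abs_of_nonneg hkernel, abs_pow]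
    gcongr
  · filter_upwards [ae_restrict_mem measurableSet_Ioo] with δ hδ
    exact (hasSum_Ffam_integrand τ α ν (by simp) hδ).summable
  · refine (integrableOn_rpow_mul_one_sub_rpow_s1 hα hν).congr_fun (fun δ hδ => ?_)
      measurableSet_Ioo
    rw [(hasSum_Ffam_integrand τ α ν (by simp) hδ).tsum_eq, mul_one,
      div_self (sub_pos.2 hδ.2).ne', one_rpow, one_mul]
  · filter_upwards [ae_restrict_mem measurableSet_Ioo] with δ hδ
    exact hasSum_Ffam_integrand τ α ν hx hδ

lemma schoenbergCoeff_eq {τ α ν : ℝ} (hτ : 0 < τ) (hα : 0 < α) (hν : 0 < ν) (n : ℕ) :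
    schoenbergCoeff τ α ν n = poch τ n / n.factorial * betaFn (α + n) (ν + τ) / betaFn α ν := by
  have := (poch_pos (show 0 < α + ν + τ by positivity) n).ne'
  rw [schoenbergCoeff, betaFn_add_nat hα (by positivity), ← add_assoc]
  field_simp

lemma schoenbergCoeff_nonneg {τ α ν : ℝ} (hτ : 0 < τ) (hα : 0 < α) (hν : 0 < ν) (n : ℕ) :
    0 ≤ schoenbergCoeff τ α ν n := by
  have := poch_pos hτ n
  have := poch_pos hα n
  have := poch_pos (show 0 < α + ν + τ by positivity) n
  have := betaFn_pos hα hν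
  have := betaFn_pos hα (show 0 < ν + τ by positivity)
  rw [schoenbergCoeff]
  positivity

theorem hasSum_schoenbergCoeff_mul_cos_pow {τ α ν : ℝ} (hτ : 0 < τ) (hα : 0 < α) (hν : 0 < ν)
    (θ : ℝ) :
    HasSum (fun n : ℕ => schoenbergCoeff τ α ν n * cos θ ^ n) (Ffam τ α ν θ) := by
  have h := (hasSum_integral_Ffam hτ hα hν (abs_cos_le_one θ)).mul_left (1 / betaFn α ν)
  have hcoeff : (fun n : ℕ => 1 / betaFn α ν *
      (poch τ n / n.factorial * cos θ ^ n * betaFn (α + n) (ν + τ)))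
      = fun n => schoenbergCoeff τ α ν n * cos θ ^ n := by
    ext n
    rw [schoenbergCoeff_eq hτ hα hν]
    ring
  rwa [hcoeff] at h

lemma Ffam_zero {τ α ν : ℝ} (hα : 0 < α) (hν : 0 < ν) : Ffam τ α ν 0 = 1 := by
  have hB := setIntegral_rpow_mul_one_sub_rpow hα hν
  rw [Ffam, ← hB, one_div_mul_eq_div, div_eq_one_iff_eq (hB ▸ (betaFn_pos hα hν).ne')]
  refine setIntegral_congr_fun measurableSet_Ioo fun δ hδ => ?_
  rw [cos_zero, mul_one, div_self (sub_pos.2 hδ.2).ne', one_rpow, one_mul]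

/-- The Schoenberg coefficients of the `F`-family are nonnegative, sum to one,
and `F_{τ,α,ν}(θ) = Σ_n b_n (cos θ)^n` for every `θ ∈ [0,π]`. -/
theorem Ffam_schoenberg_expansion (τ α ν : ℝ) (hτ : 0 < τ) (hα : 0 < α) (hν : 0 < ν) :
    (∀ n : ℕ, 0 ≤ schoenbergCoeff τ α ν n) ∧
    HasSum (fun n : ℕ => schoenbergCoeff τ α ν n) 1 ∧
    ∀ θ ∈ Set.Icc (0:ℝ) Real.pi,
      HasSum (fun n : ℕ => schoenbergCoeff τ α ν n * Real.cos θ ^ n) (Ffam τ α ν θ) := by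
  refine ⟨schoenbergCoeff_nonneg hτ hα hν, ?_,
    fun θ _ => hasSum_schoenbergCoeff_mul_cos_pow hτ hα hν θ⟩
  simpa [Ffam_zero hα hν] using hasSum_schoenbergCoeff_mul_cos_pow hτ hα hν 0
end

section
/- Let τ > 0 and let (α_n)_{n≥1} and (ν_n)_{n≥1} be positive increasing sequences with α_n → ∞ such that ν_n/α_n converges to a finite positive constant κ as n → ∞. Then for every θ ∈ [0,π], F_{τ,α_n,ν_n}(θ) converges, as n → ∞, to N_{1/(1+κ),τ}(θ) = ((1 - 1/(1+κ)) / (1 - (1/(1+κ)) cos θ))^τ = (κ/(1+κ-cos θ))^τ. -/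
open Real MeasureTheory Filter

/-- The Negative Binomial family `N_{δ,τ}(θ) = ((1-δ)/(1-δ cos θ))^τ`. -/
noncomputable def negBinom (δ τ θ : ℝ) : ℝ := ((1 - δ) / (1 - δ * Real.cos θ)) ^ τ

/-!
`F_{τ,α,ν}(θ)` is the mean of `δ ↦ N_{δ,τ}(θ)` under the Beta`(α, ν)` law. The recursion
`B(a + 1, b) = a / (a + b) · B(a, b)` gives the first two moments of that law; along the sequence
the mean tends to `c = 1 / (1 + κ)` and the second moment about `c` tends to `0`. Since
`δ ↦ N_{δ,τ}(θ)` is bounded on `(0, 1)` and continuous at `c`, a Chebyshev-type estimate then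
shows that its means converge to `N_{c,τ}(θ)`.
-/

open Set Topology ProbabilityTheory

theorem tendsto_integral_of_tendsto_integral_sub_sq {ι : Type*} {l : Filter ι}
    {μ : ι → Measure ℝ} [∀ i, IsProbabilityMeasure (μ i)] {s : Set ℝ} {f : ℝ → ℝ} {c M : ℝ}
    (hμs : ∀ i, ∀ᵐ x ∂μ i, x ∈ s) (hfM : ∀ x ∈ s, |f x| ≤ M) (hfc : ContinuousWithinAt f s c)
    (hf : ∀ i, Integrable f (μ i)) (hsq : ∀ i, Integrable (fun x => (x - c) ^ 2) (μ i))
    (hvar : Tendsto (fun i => ∫ x, (x - c) ^ 2 ∂μ i) l (𝓝 0)) :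
    Tendsto (fun i => ∫ x, f x ∂μ i) l (𝓝 (f c)) := by
  rw [Metric.tendsto_nhds]
  intro ε hε
  obtain ⟨η, hη, hfη⟩ := Metric.continuousWithinAt_iff.1 hfc (ε / 2) (half_pos hε)
  -- away from `c`, the bound `|f x - f c| ≤ M + |f c|` is dominated by `K * (x - c) ^ 2`
  set K := (M + |f c|) / η ^ 2
  have hpt : ∀ x ∈ s, |f x - f c| ≤ ε / 2 + K * (x - c) ^ 2 := by
    intro x hx
    have hB : 0 ≤ M + |f c| := by linarith [(abs_nonneg _).trans (hfM x hx), abs_nonneg (f c)]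
    have hK : 0 ≤ K := div_nonneg hB (sq_nonneg η)
    rcases lt_or_ge |x - c| η with hxc | hxc
    · have := hfη hx (by rwa [Real.dist_eq])
      rw [Real.dist_eq] at this
      nlinarith [sq_nonneg (x - c)]
    · have hη2 : η ^ 2 ≤ (x - c) ^ 2 := by nlinarith [sq_abs (x - c)]
      calc |f x - f c| ≤ M + |f c| := (abs_sub _ _).trans (by linarith [hfM x hx])
        _ = K * η ^ 2 := (div_mul_cancel₀ _ (by positivity)).symm
        _ ≤ K * (x - c) ^ 2 := mul_le_mul_of_nonneg_left hη2 hK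
        _ ≤ _ := by linarith
  filter_upwards [Metric.tendsto_nhds.1 (by simpa using hvar.const_mul K) (ε / 2) (half_pos hε)]
    with i hi
  rw [Real.dist_eq, sub_zero] at hi
  have hint : ∫ x, f x ∂μ i - f c = ∫ x, (f x - f c) ∂μ i := by
    simp [integral_sub (hf i) (integrable_const (f c))]
  calc dist (∫ x, f x ∂μ i) (f c) = |∫ x, (f x - f c) ∂μ i| := by rw [Real.dist_eq, hint]
    _ ≤ ∫ x, |f x - f c| ∂μ i := abs_integral_le_integral_abs
    _ ≤ ∫ x, (ε / 2 + K * (x - c) ^ 2) ∂μ i := by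
      refine integral_mono_ae ((hf i).sub (integrable_const _)).abs
        ((integrable_const _).add ((hsq i).const_mul K)) ?_
      filter_upwards [hμs i] with x hx using hpt x hx
    _ = ε / 2 + K * ∫ x, (x - c) ^ 2 ∂μ i := by
      rw [integral_add (integrable_const _) ((hsq i).const_mul K), integral_const_mul]
      simp
    _ < ε := by linarith [le_abs_self (K * ∫ x, (x - c) ^ 2 ∂μ i)]

theorem tendsto_div_add_of_tendsto_div {ι : Type*} {l : Filter ι} {a b : ι → ℝ} {κ : ℝ}
    (ha : ∀ i, a i ≠ 0) (h : Tendsto (fun i => b i / a i) l (𝓝 κ)) (hκ : 1 + κ ≠ 0) :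
    Tendsto (fun i => a i / (a i + b i)) l (𝓝 (1 / (1 + κ))) :=
  (tendsto_const_nhds.div (tendsto_const_nhds.add h) hκ).congr fun i => by
    rw [Pi.div_apply, one_add_div (ha i), one_div_div]

namespace ProbabilityTheory

variable {a b : ℝ}

lemma beta_add_one (ha : 0 < a) (hb : 0 < b) : beta (a + 1) b = a / (a + b) * beta a b := by
  rw [beta, beta, Real.Gamma_add_one ha.ne', add_right_comm,
    Real.Gamma_add_one (add_pos ha hb).ne']
  field_simp

lemma measurable_betaPDF : Measurable (betaPDF a b) :=
  (measurable_betaPDFReal a b).ennreal_ofReal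

lemma ae_mem_Ioo_betaMeasure : ∀ᵐ x ∂betaMeasure a b, x ∈ Ioo 0 1 := by
  rw [betaMeasure, ae_withDensity_iff measurable_betaPDF]
  refine ae_of_all _ fun x hx => ?_
  by_contra h
  exact hx (by
    rw [betaPDF, betaPDFReal, if_neg (show ¬(0 < x ∧ x < 1) from h), ENNReal.ofReal_zero])

lemma integral_betaMeasure (ha : 0 < a) (hb : 0 < b) (f : ℝ → ℝ) :
    ∫ x, f x ∂betaMeasure a b
      = 1 / beta a b * ∫ x in Ioo 0 1, f x * x ^ (a - 1) * (1 - x) ^ (b - 1) := by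
  rw [betaMeasure, integral_withDensity_eq_integral_toReal_smul measurable_betaPDF
    (ae_of_all _ fun _ => ENNReal.ofReal_lt_top), ← integral_const_mul,
    ← integral_indicator measurableSet_Ioo]
  congr 1 with x
  by_cases hx : x ∈ Ioo 0 1
  · rw [betaPDF, ENNReal.toReal_ofReal (betaPDFReal_pos hx.1 hx.2 ha hb).le, betaPDFReal,
      if_pos (show 0 < x ∧ x < 1 from hx), indicator_of_mem hx, smul_eq_mul]
    ring
  · rw [betaPDF, betaPDFReal, if_neg (show ¬(0 < x ∧ x < 1) from hx), indicator_of_notMem hx]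
    simp

lemma integral_id_mul_betaMeasure (ha : 0 < a) (hb : 0 < b) (f : ℝ → ℝ) :
    ∫ x, x * f x ∂betaMeasure a b = a / (a + b) * ∫ x, f x ∂betaMeasure (a + 1) b := by
  have hshift : ∀ x ∈ Ioo (0 : ℝ) 1, x * f x * x ^ (a - 1) * (1 - x) ^ (b - 1)
      = f x * x ^ (a + 1 - 1) * (1 - x) ^ (b - 1) := fun x hx => by
    rw [add_sub_right_comm, rpow_add_one hx.1.ne']
    ring
  rw [integral_betaMeasure ha hb, integral_betaMeasure (by linarith) hb,
    setIntegral_congr_fun measurableSet_Ioo hshift, beta_add_one ha hb]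
  have := beta_pos ha hb
  field_simp

lemma integral_id_betaMeasure (ha : 0 < a) (hb : 0 < b) :
    ∫ x, x ∂betaMeasure a b = a / (a + b) := by
  have := isProbabilityMeasureBeta (by linarith : 0 < a + 1) hb
  simpa using integral_id_mul_betaMeasure ha hb (fun _ => 1)

lemma integrable_betaMeasure_of_bound (ha : 0 < a) (hb : 0 < b) {f : ℝ → ℝ} {C : ℝ}
    (hf : Measurable f) (hC : ∀ x ∈ Ioo 0 1, |f x| ≤ C) : Integrable f (betaMeasure a b) :=
  have := isProbabilityMeasureBeta ha hb
  .of_bound hf.aestronglyMeasurable C (ae_mem_Ioo_betaMeasure.mono hC)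

lemma integrable_betaMeasure_of_continuous (ha : 0 < a) (hb : 0 < b) {f : ℝ → ℝ}
    (hf : Continuous f) : Integrable f (betaMeasure a b) := by
  obtain ⟨C, hC⟩ := (isCompact_Icc (a := (0 : ℝ)) (b := 1)).exists_bound_of_continuousOn
    hf.continuousOn
  exact integrable_betaMeasure_of_bound ha hb hf.measurable
    fun x hx => hC x (Ioo_subset_Icc_self hx)

lemma integral_sub_sq_betaMeasure (ha : 0 < a) (hb : 0 < b) (c : ℝ) :
    ∫ x, (x - c) ^ 2 ∂betaMeasure a b
      = a / (a + b) * ((a + 1) / (a + 1 + b) - 2 * c) + c ^ 2 := by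
  have := isProbabilityMeasureBeta ha hb
  have := isProbabilityMeasureBeta (by linarith : 0 < a + 1) hb
  have hsplit : (fun x => (x - c) ^ 2) = fun x => x * (x - 2 * c) + c ^ 2 := by
    ext x; ring
  rw [hsplit, integral_add (integrable_betaMeasure_of_continuous ha hb (by fun_prop))
    (integrable_const _), integral_id_mul_betaMeasure ha hb, integral_sub
    (integrable_betaMeasure_of_continuous (by linarith) hb (by fun_prop)) (integrable_const _),
    integral_id_betaMeasure (by linarith) hb]
  simp

theorem tendsto_integral_sub_sq_betaMeasure {ι : Type*} {l : Filter ι} {a b : ι → ℝ} {κ : ℝ}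
    (ha : ∀ i, 0 < a i) (hb : ∀ i, 0 < b i) (hatop : Tendsto a l atTop) (hκ : 0 ≤ κ)
    (hratio : Tendsto (fun i => b i / a i) l (𝓝 κ)) :
    Tendsto (fun i => ∫ x, (x - 1 / (1 + κ)) ^ 2 ∂betaMeasure (a i) (b i)) l (𝓝 0) := by
  set c := 1 / (1 + κ)
  have h1κ : 1 + κ ≠ 0 := by positivity
  have hmean : Tendsto (fun i => a i / (a i + b i)) l (𝓝 c) :=
    tendsto_div_add_of_tendsto_div (fun i => (ha i).ne') hratio h1κ
  have hshift : Tendsto (fun i => (a i + 1) / (a i + 1 + b i)) l (𝓝 c) := by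
    refine tendsto_div_add_of_tendsto_div (fun i => by linarith [ha i]) ?_ h1κ
    have hone : Tendsto (fun i => a i / (a i + 1)) l (𝓝 1) := by
      simpa using tendsto_div_add_of_tendsto_div (b := 1) (κ := 0) (fun i => (ha i).ne')
        (by simpa [Function.comp_def] using tendsto_inv_atTop_zero.comp hatop) (by norm_num)
    refine (by simpa using hratio.mul hone : Tendsto _ l (𝓝 κ)).congr fun i => ?_
    have := ha i
    field_simp
  have hlim := (hmean.mul (hshift.sub_const (2 * c))).add_const (c ^ 2)
  rw [show c * (c - 2 * c) + c ^ 2 = 0 by ring] at hlim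
  simpa only [integral_sub_sq_betaMeasure (ha _) (hb _)] using hlim

end ProbabilityTheory

section negBinom

variable {δ τ : ℝ} (θ : ℝ)

lemma negBinom_mem_Icc (hδ : δ ∈ Icc 0 1) (hτ : 0 ≤ τ) : negBinom δ τ θ ∈ Icc 0 1 := by
  have hle : 1 - δ ≤ 1 - δ * cos θ := by linarith [mul_le_of_le_one_right hδ.1 (cos_le_one θ)]
  have hbase : (1 - δ) / (1 - δ * cos θ) ∈ Icc 0 1 :=
    ⟨div_nonneg (by linarith [hδ.2]) (by linarith [hδ.2]),
      div_le_one_of_le₀ hle (by linarith [hδ.2])⟩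
  exact ⟨rpow_nonneg hbase.1 τ, rpow_le_one hbase.1 hbase.2 hτ⟩

lemma continuousAt_negBinom (hδ : |δ| < 1) : ContinuousAt (fun δ => negBinom δ τ θ) δ := by
  have hden : 0 < 1 - δ * cos θ := by
    have : |δ * cos θ| ≤ |δ| := by
      rw [abs_mul]; exact mul_le_of_le_one_right (abs_nonneg δ) (abs_cos_le_one θ)
    linarith [le_abs_self (δ * cos θ)]
  have hbase : 0 < (1 - δ) / (1 - δ * cos θ) := div_pos (by linarith [le_abs_self δ]) hden
  exact ((continuousAt_const.sub continuousAt_id).div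
    (continuousAt_const.sub (continuousAt_id.mul continuousAt_const)) hden.ne').rpow_const
    (Or.inl hbase.ne')

lemma measurable_negBinom : Measurable fun δ => negBinom δ τ θ := by
  unfold negBinom
  fun_prop

end negBinom

-- `betaFn` and `ProbabilityTheory.beta` are the same definition.
lemma Ffam_eq_integral_betaMeasure {τ α ν : ℝ} (θ : ℝ) (hα : 0 < α) (hν : 0 < ν) :
    Ffam τ α ν θ = ∫ δ, negBinom δ τ θ ∂betaMeasure α ν :=
  (integral_betaMeasure hα hν _).symm

theorem Ffam_tendsto_negBinom_general (τ : ℝ) (hτ : 0 < τ) (α ν : ℕ → ℝ)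
    (hαpos : ∀ n, 0 < α n) (hνpos : ∀ n, 0 < ν n)
    (hαtop : Filter.Tendsto α Filter.atTop Filter.atTop)
    (κ : ℝ) (hκ : 0 < κ)
    (hratio : Filter.Tendsto (fun n => ν n / α n) Filter.atTop (nhds κ)) :
    ∀ θ ∈ Set.Icc (0:ℝ) Real.pi,
      Filter.Tendsto (fun n => Ffam τ (α n) (ν n) θ) Filter.atTop
        (nhds (negBinom (1 / (1 + κ)) τ θ)) := by
  intro θ _
  have hc : |1 / (1 + κ)| < 1 := by
    rw [abs_of_pos (by positivity), div_lt_one (by positivity)]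
    linarith
  have := fun n => isProbabilityMeasureBeta (hαpos n) (hνpos n)
  have hbound : ∀ x ∈ Ioo (0 : ℝ) 1, |negBinom x τ θ| ≤ 1 := fun x hx => by
    obtain ⟨h0, h1⟩ := negBinom_mem_Icc θ (Ioo_subset_Icc_self hx) hτ.le
    rwa [abs_of_nonneg h0]
  simp_rw [Ffam_eq_integral_betaMeasure θ (hαpos _) (hνpos _)]
  exact tendsto_integral_of_tendsto_integral_sub_sq (fun _ => ae_mem_Ioo_betaMeasure) hbound
    (continuousAt_negBinom θ hc).continuousWithinAt
    (fun n => integrable_betaMeasure_of_bound (hαpos n) (hνpos n) (measurable_negBinom θ) hbound)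
    (fun n => integrable_betaMeasure_of_continuous (hαpos n) (hνpos n) (by fun_prop))
    (tendsto_integral_sub_sq_betaMeasure hαpos hνpos hαtop hκ.le hratio)

/-- If `α_n, ν_n` are positive increasing sequences with `α_n → ∞` and `ν_n/α_n → κ > 0`, then
`F_{τ,α_n,ν_n}(θ) → N_{1/(1+κ),τ}(θ)` for every `θ ∈ [0,π]`. -/
theorem Ffam_tendsto_negBinom (τ : ℝ) (hτ : 0 < τ) (α ν : ℕ → ℝ)
    (hαpos : ∀ n, 0 < α n) (hνpos : ∀ n, 0 < ν n)
    (hαmono : StrictMono α) (hνmono : StrictMono ν)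
    (hαtop : Filter.Tendsto α Filter.atTop Filter.atTop)
    (κ : ℝ) (hκ : 0 < κ)
    (hratio : Filter.Tendsto (fun n => ν n / α n) Filter.atTop (nhds κ)) :
    ∀ θ ∈ Set.Icc (0:ℝ) Real.pi,
      Filter.Tendsto (fun n => Ffam τ (α n) (ν n) θ) Filter.atTop
        (nhds (negBinom (1 / (1 + κ)) τ θ)) :=
  Ffam_tendsto_negBinom_general τ hτ α ν hαpos hνpos hαtop κ hκ hratio
end

section
/- Let α > 0 and let z be a real number with 0 < z < 1. Write g(z) = 1/2 + (1/2)(1-z)^{1/2} and p(z) = -(α+1/2)(1-z) + α(1-z)^{1/2} + 1/2. Then the Gauss hypergeometric series satisfies ₂F₁(α, α+1/2, 2α+2; z) = Σ_{n=0}^∞ (α)_n (α+1/2)_n / ((2α+2)_n · n!) · z^n = (2α+1) g(z)^{-2α} p(z) / ((α+1)(α+1/2) z). -/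
/-!
The coefficients `cₙ` of the series satisfy `(n + 1)(n + c) cₙ₊₁ = (n + a)(n + b) cₙ` with
`a = α`, `b = α + 1/2`, `c = 2α + 2`, so its sum `F` solves the hypergeometric equation
`x(1 - x)F'' + (c - (a + b + 1)x)F' - abF = 0` on `[0, 1)`. In the variable `t = g(x)` one has
`x = 4t(1 - t)` and `√(1 - x) = 2t - 1`, and the right-hand side becomes
`u = ((2α + 1)t - α) t^(-(2α + 1)) / (α + 1)`, whose first two derivatives in `x` are again
powers of `t`; it solves the same equation and `u(0) = 1 = F(0)`. By Abel's identity the Wronskian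
`F'u - Fu'` times `x^c (1 - x)^(a + b + 1 - c)` is constant; as `c > 0` it vanishes at `0`, hence
everywhere, so `F / u` is constant.
-/

open Real

open Filter Set Topology

def derivCoeff (p : ℕ → ℝ) (n : ℕ) : ℝ := (n + 1) * p (n + 1)

noncomputable def powerSeriesSum (p : ℕ → ℝ) (x : ℝ) : ℝ := ∑' n, p n * x ^ n

theorem powerSeriesSum_zero (p : ℕ → ℝ) : powerSeriesSum p 0 = p 0 := by
  rw [powerSeriesSum, tsum_eq_single 0 fun n hn => by simp [hn]]
  simp

def ConvOnUnitBall (p : ℕ → ℝ) : Prop :=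
  ∀ r : ℝ, 0 ≤ r → r < 1 → Summable fun n => |p n| * r ^ n

namespace ConvOnUnitBall

variable {p : ℕ → ℝ}

theorem summable (hp : ConvOnUnitBall p) {x : ℝ} (hx : |x| < 1) :
    Summable fun n => p n * x ^ n :=
  .of_norm (by simpa [abs_mul, abs_pow] using hp |x| (abs_nonneg x) hx)

theorem hasSum (hp : ConvOnUnitBall p) {x : ℝ} (hx : |x| < 1) :
    HasSum (fun n => p n * x ^ n) (powerSeriesSum p x) :=
  (hp.summable hx).hasSum

theorem of_one_le_radius
    (h : 1 ≤ (FormalMultilinearSeries.ofScalars ℝ p).radius) : ConvOnUnitBall p := by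
  intro r hr0 hr1
  have hlt : (r.toNNReal : ENNReal) < (FormalMultilinearSeries.ofScalars ℝ p).radius :=
    lt_of_lt_of_le (by simpa using hr1) h
  simpa [FormalMultilinearSeries.ofScalars_norm, Real.coe_toNNReal _ hr0] using
    (FormalMultilinearSeries.ofScalars ℝ p).summable_norm_mul_pow hlt

theorem derivCoeff (hp : ConvOnUnitBall p) : ConvOnUnitBall (_root_.derivCoeff p) := by
  intro r hr0 hr1
  set r' := (1 + r) / 2 with hr'_def
  have hr' : 0 < r' := by positivity
  have hq : r / r' < 1 := (div_lt_one hr').2 (by rw [hr'_def]; linarith)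
  have hlim : Tendsto (fun n : ℕ => (n + 1) * (r / r') ^ n) atTop (𝓝 0) := by
    have := (tendsto_self_mul_const_pow_of_lt_one (by positivity) hq).add
      (tendsto_pow_atTop_nhds_zero_of_lt_one (by positivity) hq)
    simpa [add_mul] using this
  have hsum : Summable fun n => |p (n + 1)| * r' ^ (n + 1) / r' :=
    ((summable_nat_add_iff 1).2 (hp r' hr'.le (by rw [hr'_def]; linarith))).div_const r'
  refine hsum.of_norm_bounded_eventually_nat ?_
  filter_upwards [hlim.eventually (gt_mem_nhds one_pos)] with n hn
  have hrn : r ^ n = (r / r') ^ n * r' ^ n := by rw [div_pow, div_mul_cancel₀ _ (by positivity)]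
  calc ‖|_root_.derivCoeff p n| * r ^ n‖
      = |p (n + 1)| * r' ^ n * ((n + 1) * (r / r') ^ n) := by
        rw [Real.norm_eq_abs, abs_of_nonneg (by positivity), _root_.derivCoeff, abs_mul,
          abs_of_nonneg (by positivity : (0 : ℝ) ≤ n + 1), hrn]
        ring
    _ ≤ |p (n + 1)| * r' ^ n * 1 := by gcongr
    _ = |p (n + 1)| * r' ^ (n + 1) / r' := by field_simp; ring

theorem hasDerivAt (hp : ConvOnUnitBall p) {x : ℝ} (hx : |x| < 1) :
    HasDerivAt (powerSeriesSum p) (powerSeriesSum (_root_.derivCoeff p) x) x := by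
  set r := (1 + |x|) / 2 with hr_def
  have hxr : x ∈ Metric.ball (0 : ℝ) r := by
    rw [Metric.mem_ball, dist_zero_right, Real.norm_eq_abs, hr_def]; linarith
  have hsum : Summable fun n => p (n + 1) * x ^ (n + 1) :=
    (summable_nat_add_iff 1).2 (hp.summable hx)
  have htail : HasDerivAt (fun y => ∑' n, p (n + 1) * y ^ (n + 1))
      (∑' n, _root_.derivCoeff p n * x ^ n) x := by
    refine hasDerivAt_tsum_of_isPreconnected (g := fun n y => p (n + 1) * y ^ (n + 1))
      (g' := fun n y => _root_.derivCoeff p n * y ^ n)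
      (hp.derivCoeff r (by positivity) (by rw [hr_def]; linarith))
      Metric.isOpen_ball (convex_ball 0 r).isPreconnected (fun n y _ => ?_) (fun n y hy => ?_)
      hxr hsum hxr
    · refine ((hasDerivAt_pow (n + 1) y).const_mul (p (n + 1))).congr_deriv ?_
      simp only [_root_.derivCoeff, Nat.add_sub_cancel]; push_cast; ring
    · rw [Metric.mem_ball, dist_zero_right] at hy
      rw [norm_mul, norm_pow, Real.norm_eq_abs, Real.norm_eq_abs]
      exact mul_le_mul_of_nonneg_left (pow_le_pow_left₀ (abs_nonneg y) hy.le n) (abs_nonneg _)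
  have hsplit : powerSeriesSum p =ᶠ[𝓝 x] fun y => p 0 + ∑' n, p (n + 1) * y ^ (n + 1) := by
    filter_upwards [(isOpen_lt continuous_abs continuous_const).mem_nhds hx] with y hy
    simpa [powerSeriesSum] using (hp.summable hy).tsum_eq_zero_add
  exact (htail.const_add (p 0)).congr_of_eventuallyEq hsplit

end ConvOnUnitBall

theorem HasSum.natCast_mul_of_derivCoeff {q : ℕ → ℝ} {x s : ℝ}
    (h : HasSum (fun n => derivCoeff q n * x ^ n) s) :
    HasSum (fun n => n * q n * x ^ n) (x * s) := by
  have e : (fun n => x * (derivCoeff q n * x ^ n)) =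
      fun n => ((n + 1 : ℕ) : ℝ) * q (n + 1) * x ^ (n + 1) :=
    funext fun n => by simp only [derivCoeff]; push_cast; ring
  refine (hasSum_nat_add_iff' 1).1 ?_
  rw [Finset.sum_range_one, Nat.cast_zero, zero_mul, zero_mul, sub_zero, ← e]
  exact h.mul_left x

structure IsHypergeomSolution (a b c : ℝ) (f f' f'' : ℝ → ℝ) : Prop where
  hasDerivAt : ∀ x ∈ Ico (0 : ℝ) 1, HasDerivAt f (f' x) x
  hasDerivAt_deriv : ∀ x ∈ Ico (0 : ℝ) 1, HasDerivAt f' (f'' x) x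
  ode : ∀ x ∈ Ioo (0 : ℝ) 1,
    x * (1 - x) * f'' x + (c - (a + b + 1) * x) * f' x - a * b * f x = 0

namespace ConvOnUnitBall

variable {p : ℕ → ℝ} {a b c : ℝ}

theorem hypergeom_ode (hp : ConvOnUnitBall p)
    (hrec : ∀ n : ℕ, (n + 1) * (n + c) * p (n + 1) = (n + a) * (n + b) * p n)
    {x : ℝ} (hx : |x| < 1) :
    x * (1 - x) * powerSeriesSum (_root_.derivCoeff (_root_.derivCoeff p)) x
      + (c - (a + b + 1) * x) * powerSeriesSum (_root_.derivCoeff p) x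
      - a * b * powerSeriesSum p x = 0 := by
  set p' := _root_.derivCoeff p
  set F := powerSeriesSum p x
  set F' := powerSeriesSum p' x
  set F'' := powerSeriesSum (_root_.derivCoeff p') x
  have h0 : HasSum (fun n => p n * x ^ n) F := hp.hasSum hx
  have h1 : HasSum (fun n => p' n * x ^ n) F' := hp.derivCoeff.hasSum hx
  have hx1 : HasSum (fun n => n * p n * x ^ n) (x * F') := h1.natCast_mul_of_derivCoeff
  have hx2 : HasSum (fun n => n * p' n * x ^ n) (x * F'') :=
    (hp.derivCoeff.derivCoeff.hasSum hx).natCast_mul_of_derivCoeff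
  have hxx2 : HasSum (fun n => n * ((n - 1) * p n) * x ^ n) (x * (x * F'')) := by
    refine HasSum.natCast_mul_of_derivCoeff ?_
    convert hx2 using 2 with n
    simp only [p', _root_.derivCoeff]; push_cast; ring
  have hsum := (hx2.add (h1.mul_left c)).sub
    ((hxx2.add (hx1.mul_left (a + b + 1))).add (h0.mul_left (a * b)))
  have hzero : HasSum (fun n => n * p' n * x ^ n + c * (p' n * x ^ n) -
      (n * ((n - 1) * p n) * x ^ n + (a + b + 1) * (n * p n * x ^ n)
        + a * b * (p n * x ^ n))) 0 := by
    convert hasSum_zero with n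
    simp only [p', _root_.derivCoeff]
    linear_combination x ^ n * hrec n
  linear_combination hsum.unique hzero

theorem isHypergeomSolution (hp : ConvOnUnitBall p)
    (hrec : ∀ n : ℕ, (n + 1) * (n + c) * p (n + 1) = (n + a) * (n + b) * p n) :
    IsHypergeomSolution a b c (powerSeriesSum p) (powerSeriesSum (_root_.derivCoeff p))
      (powerSeriesSum (_root_.derivCoeff (_root_.derivCoeff p))) := by
  have habs : ∀ x ∈ Ico (0 : ℝ) 1, |x| < 1 := fun x hx =>
    abs_lt.2 ⟨by linarith [hx.1], hx.2⟩
  exact ⟨fun x hx => hp.hasDerivAt (habs x hx), fun x hx => hp.derivCoeff.hasDerivAt (habs x hx),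
    fun x hx => hp.hypergeom_ode hrec (habs x (Ioo_subset_Ico_self hx))⟩

end ConvOnUnitBall

theorem eq_of_hasDerivAt_eq_zero {f : ℝ → ℝ} {a b : ℝ} (hab : a ≤ b)
    (hf : ContinuousOn f (Icc a b)) (hf' : ∀ x ∈ Ioo a b, HasDerivAt f 0 x) : f b = f a := by
  rcases hab.eq_or_lt with rfl | hab
  · rfl
  obtain ⟨c, -, hc⟩ := exists_hasDerivAt_eq_slope f (fun _ => 0) hab hf hf'
  rw [eq_comm, div_eq_zero_iff, sub_eq_zero] at hc
  exact hc.resolve_right (sub_ne_zero.2 hab.ne')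

namespace IsHypergeomSolution

variable {a b c : ℝ} {f f' f'' u u' u'' : ℝ → ℝ}

theorem hasDerivAt_wronskian_mul_weight (hf : IsHypergeomSolution a b c f f' f'')
    (hu : IsHypergeomSolution a b c u u' u'') {y : ℝ} (hy : y ∈ Ioo (0 : ℝ) 1) :
    HasDerivAt (fun y => (f' y * u y - f y * u' y) * (y ^ c * (1 - y) ^ (a + b + 1 - c))) 0 y := by
  have hy1 : 0 < 1 - y := by linarith [hy.2]
  have hy' := Ioo_subset_Ico_self hy
  have hW := ((hf.hasDerivAt_deriv y hy').mul (hu.hasDerivAt y hy')).sub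
    ((hf.hasDerivAt y hy').mul (hu.hasDerivAt_deriv y hy'))
  have hPow : HasDerivAt (fun y => y ^ c) (c * y ^ (c - 1)) y :=
    Real.hasDerivAt_rpow_const (Or.inl hy.1.ne')
  have hPow' : HasDerivAt (fun y => (1 - y) ^ (a + b + 1 - c))
      (-1 * (a + b + 1 - c) * (1 - y) ^ (a + b + 1 - c - 1)) y :=
    ((hasDerivAt_id y).const_sub 1).rpow_const (Or.inl hy1.ne')
  refine (hW.mul (hPow.mul hPow')).congr_deriv ?_
  have hyc : y ^ c = y ^ (c - 1) * y := by
    rw [Real.rpow_sub_one hy.1.ne', div_mul_cancel₀ _ hy.1.ne']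
  have hyd : (1 - y) ^ (a + b + 1 - c) = (1 - y) ^ (a + b + 1 - c - 1) * (1 - y) := by
    rw [Real.rpow_sub_one hy1.ne', div_mul_cancel₀ _ hy1.ne']
  simp only [Pi.mul_apply, Pi.sub_apply]
  rw [hyc, hyd]
  linear_combination (y ^ (c - 1) * (1 - y) ^ (a + b + 1 - c - 1)) *
    (u y * hf.ode y hy - f y * hu.ode y hy)

theorem wronskian_eq_zero (hc : 0 < c) (hf : IsHypergeomSolution a b c f f' f'')
    (hu : IsHypergeomSolution a b c u u' u'') {x : ℝ} (hx : x ∈ Ioo (0 : ℝ) 1) :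
    f' x * u x - f x * u' x = 0 := by
  set V := fun y => (f' y * u y - f y * u' y) * (y ^ c * (1 - y) ^ (a + b + 1 - c))
  have hVcont : ContinuousOn V (Icc 0 x) := fun y hy => by
    have hy : y ∈ Ico (0 : ℝ) 1 := ⟨hy.1, hy.2.trans_lt hx.2⟩
    have hy1 : 0 < 1 - y := by linarith [hy.2]
    exact (((hf.hasDerivAt_deriv y hy).continuousAt.mul (hu.hasDerivAt y hy).continuousAt).sub
      ((hf.hasDerivAt y hy).continuousAt.mul (hu.hasDerivAt_deriv y hy).continuousAt)).mul
      ((Real.continuousAt_rpow_const y c (Or.inr hc.le)).mul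
        ((continuousAt_const.sub continuousAt_id).rpow_const (Or.inl hy1.ne')))
      |>.continuousWithinAt
  have hVx : V x = 0 := by
    rw [eq_of_hasDerivAt_eq_zero hx.1.le hVcont fun y hy =>
      hf.hasDerivAt_wronskian_mul_weight hu ⟨hy.1, hy.2.trans hx.2⟩]
    simp [V, Real.zero_rpow hc.ne']
  have hweight : 0 < x ^ c * (1 - x) ^ (a + b + 1 - c) :=
    mul_pos (Real.rpow_pos_of_pos hx.1 c) (Real.rpow_pos_of_pos (by linarith [hx.2]) _)
  exact (mul_eq_zero.1 hVx).resolve_right hweight.ne'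

theorem eq_of_apply_zero_eq (hc : 0 < c) (hf : IsHypergeomSolution a b c f f' f'')
    (hu : IsHypergeomSolution a b c u u' u'') (hu0 : ∀ x ∈ Ico (0 : ℝ) 1, u x ≠ 0)
    (h0 : f 0 = u 0) {x : ℝ} (hx : x ∈ Ico (0 : ℝ) 1) : f x = u x := by
  have hsub : Icc 0 x ⊆ Ico (0 : ℝ) 1 := Icc_subset_Ico_right hx.2
  have hR : ∀ y ∈ Ioo 0 x, HasDerivAt (fun y => f y / u y) 0 y := fun y hy => by
    have hy' : y ∈ Ioo (0 : ℝ) 1 := ⟨hy.1, hy.2.trans hx.2⟩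
    have hy'' := hsub (Ioo_subset_Icc_self hy)
    refine ((hf.hasDerivAt y hy'').div (hu.hasDerivAt y hy'') (hu0 y hy'')).congr_deriv ?_
    rw [hf.wronskian_eq_zero hc hu hy', zero_div]
  have hRcont : ContinuousOn (fun y => f y / u y) (Icc 0 x) := fun y hy =>
    ((hf.hasDerivAt y (hsub hy)).continuousAt.div (hu.hasDerivAt y (hsub hy)).continuousAt
      (hu0 y (hsub hy))).continuousWithinAt
  have hratio := eq_of_hasDerivAt_eq_zero hx.1 hRcont hR
  rwa [h0, div_self (hu0 0 ⟨le_rfl, one_pos⟩), div_eq_one_iff_eq (hu0 x hx)] at hratio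

end IsHypergeomSolution

section Hypergeometric

variable {a b c : ℝ}

theorem ordinaryHypergeometricCoefficient_eq_poch (n : ℕ) :
    ordinaryHypergeometricCoefficient a b c n = poch a n * poch b n / (poch c n * n.factorial) := by
  rw [div_eq_mul_inv, mul_inv]; simp only [poch]; ring

theorem ordinaryHypergeometricCoefficient_succ (hc : ∀ k : ℕ, (k : ℝ) ≠ -c) (n : ℕ) :
    (n + 1) * (n + c) * ordinaryHypergeometricCoefficient a b c (n + 1)
      = (n + a) * (n + b) * ordinaryHypergeometricCoefficient a b c n := by
  have hpoch : (ascPochhammer ℝ n).eval c ≠ 0 := by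
    rw [Ne, ascPochhammer_eval_eq_zero_iff]; exact fun ⟨k, _, hk⟩ => hc k hk
  have hcn : c + n ≠ 0 := fun h => hc n (by linarith)
  simp only [ordinaryHypergeometricCoefficient, ascPochhammer_succ_eval, Nat.factorial_succ]
  push_cast
  field_simp
  ring

theorem convOnUnitBall_ordinaryHypergeometricCoefficient
    (habc : ∀ k : ℕ, (k : ℝ) ≠ -a ∧ (k : ℝ) ≠ -b ∧ (k : ℝ) ≠ -c) :
    ConvOnUnitBall (ordinaryHypergeometricCoefficient a b c) :=
  .of_one_le_radius (ordinaryHypergeometricSeries_radius_eq_one (𝔸 := ℝ) a b c habc).ge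

end Hypergeometric

/-- The function `g` of the statement. -/
noncomputable def sqrtMean (x : ℝ) : ℝ := 1 / 2 + 1 / 2 * √(1 - x)

section SqrtMean

variable {x : ℝ}

theorem sqrt_one_sub_eq_two_mul_sqrtMean_sub_one (x : ℝ) : √(1 - x) = 2 * sqrtMean x - 1 := by
  rw [sqrtMean]; ring

theorem half_lt_sqrtMean (hx : x < 1) : 1 / 2 < sqrtMean x := by
  have : 0 < √(1 - x) := Real.sqrt_pos.2 (by linarith)
  rw [sqrtMean]; linarith

theorem four_mul_sqrtMean_mul_one_sub (hx : x ≤ 1) : 4 * sqrtMean x * (1 - sqrtMean x) = x := by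
  have h := Real.sq_sqrt (by linarith : 0 ≤ 1 - x)
  rw [sqrtMean]; linear_combination -h

theorem hasDerivAt_sqrtMean (hx : x < 1) :
    HasDerivAt sqrtMean (-1 / (4 * (2 * sqrtMean x - 1))) x := by
  have h := (((hasDerivAt_id' x).const_sub 1).sqrt (by linarith)).const_mul (1 / 2)
  refine (h.const_add (1 / 2)).congr_deriv ?_
  rw [← sqrt_one_sub_eq_two_mul_sqrtMean_sub_one]
  field_simp
  ring

theorem hasDerivAt_sqrtMean_rpow (hx : x < 1) (p : ℝ) :
    HasDerivAt (fun y => sqrtMean y ^ p)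
      (-p * sqrtMean x ^ (p - 1) / (4 * (2 * sqrtMean x - 1))) x := by
  have ht := half_lt_sqrtMean hx
  refine ((hasDerivAt_sqrtMean hx).rpow_const (Or.inl (by linarith))).congr_deriv ?_
  ring

end SqrtMean

noncomputable def closedForm (α x : ℝ) : ℝ :=
  ((2 * α + 1) * sqrtMean x - α) / (α + 1) * sqrtMean x ^ (-(2 * α + 1))

section ClosedForm

variable {α x : ℝ}

theorem hasDerivAt_closedForm (hα : α + 1 ≠ 0) (hx : x < 1) :
    HasDerivAt (closedForm α)
      (α * (2 * α + 1) / (4 * (α + 1)) * sqrtMean x ^ (-(2 * α + 2))) x := by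
  have ht := half_lt_sqrtMean hx
  refine ((((hasDerivAt_sqrtMean hx).const_mul (2 * α + 1)).sub_const α).div_const (α + 1)
    |>.mul (hasDerivAt_sqrtMean_rpow hx _)).congr_deriv ?_
  rw [show -(2 * α + 1) - 1 = -(2 * α + 2) by ring,
    show -(2 * α + 1) = -(2 * α + 2) + 1 by ring, Real.rpow_add_one (by linarith)]
  have : 2 * sqrtMean x - 1 ≠ 0 := by linarith
  field_simp
  ring

theorem hasDerivAt_closedForm_deriv (hα : α + 1 ≠ 0) (hx : x < 1) :
    HasDerivAt (fun y => α * (2 * α + 1) / (4 * (α + 1)) * sqrtMean y ^ (-(2 * α + 2)))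
      (α * (2 * α + 1) / 8 * sqrtMean x ^ (-(2 * α + 3)) / (2 * sqrtMean x - 1)) x := by
  have ht := half_lt_sqrtMean hx
  refine ((hasDerivAt_sqrtMean_rpow hx _).const_mul _).congr_deriv ?_
  rw [show -(2 * α + 2) - 1 = -(2 * α + 3) by ring]
  have : 2 * sqrtMean x - 1 ≠ 0 := by linarith
  field_simp
  ring

theorem closedForm_ode (hα : α + 1 ≠ 0) (hx : x < 1) :
    x * (1 - x) * (α * (2 * α + 1) / 8 * sqrtMean x ^ (-(2 * α + 3)) / (2 * sqrtMean x - 1))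
      + (2 * α + 2 - (α + (α + 1 / 2) + 1) * x)
        * (α * (2 * α + 1) / (4 * (α + 1)) * sqrtMean x ^ (-(2 * α + 2)))
      - α * (α + 1 / 2) * closedForm α x = 0 := by
  have ht := half_lt_sqrtMean hx
  have hx' := four_mul_sqrtMean_mul_one_sub hx.le
  have h1x : 1 - x = (2 * sqrtMean x - 1) ^ 2 := by
    rw [← sqrt_one_sub_eq_two_mul_sqrtMean_sub_one, Real.sq_sqrt (by linarith)]
  have h2 : sqrtMean x ^ (-(2 * α + 2)) = sqrtMean x ^ (-(2 * α + 3)) * sqrtMean x := by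
    rw [← Real.rpow_add_one (by linarith)]; ring_nf
  have h1 :
      sqrtMean x ^ (-(2 * α + 1)) = sqrtMean x ^ (-(2 * α + 3)) * sqrtMean x * sqrtMean x := by
    rw [← h2, ← Real.rpow_add_one (by linarith)]; ring_nf
  rw [closedForm, h1, h2, h1x]
  generalize sqrtMean x = t at *
  generalize t ^ (-(2 * α + 3)) = T
  subst hx'
  have : 2 * t - 1 ≠ 0 := by linarith
  field_simp
  ring

theorem closedForm_zero (hα : α + 1 ≠ 0) : closedForm α 0 = 1 := by
  norm_num [closedForm, sqrtMean]
  field_simp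
  ring

theorem closedForm_pos (hα : 0 ≤ 2 * α + 1) (hx : x < 1) : 0 < closedForm α x := by
  have ht := half_lt_sqrtMean hx
  have hnum : 0 < (2 * α + 1) * sqrtMean x - α := by nlinarith
  exact mul_pos (div_pos hnum (by linarith)) (Real.rpow_pos_of_pos (by linarith) _)

theorem isHypergeomSolution_closedForm (hα : α + 1 ≠ 0) :
    IsHypergeomSolution α (α + 1 / 2) (2 * α + 2) (closedForm α)
      (fun x => α * (2 * α + 1) / (4 * (α + 1)) * sqrtMean x ^ (-(2 * α + 2)))
      (fun x => α * (2 * α + 1) / 8 * sqrtMean x ^ (-(2 * α + 3)) / (2 * sqrtMean x - 1)) :=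
  ⟨fun _ hx => hasDerivAt_closedForm hα hx.2, fun _ hx => hasDerivAt_closedForm_deriv hα hx.2,
    fun _ hx => closedForm_ode hα hx.2⟩

theorem closedForm_eq (hα : α + 1 ≠ 0) (hα' : 2 * α + 1 ≠ 0) (hx0 : x ≠ 0)
    (hx1 : x ≤ 1) :
    closedForm α x = (2 * α + 1) * sqrtMean x ^ (-(2 * α)) *
      (-(α + 1 / 2) * (1 - x) + α * √(1 - x) + 1 / 2) / ((α + 1) * (α + 1 / 2) * x) := by
  have ht : 1 / 2 ≤ sqrtMean x := by
    rw [sqrtMean]; linarith [Real.sqrt_nonneg (1 - x)]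
  have hx := four_mul_sqrtMean_mul_one_sub hx1
  have h2α : sqrtMean x ^ (-(2 * α)) = sqrtMean x ^ (-(2 * α + 1)) * sqrtMean x := by
    rw [← Real.rpow_add_one (by linarith)]; ring_nf
  rw [closedForm, h2α, sqrt_one_sub_eq_two_mul_sqrtMean_sub_one]
  generalize sqrtMean x = t at *
  generalize t ^ (-(2 * α + 1)) = T
  subst hx
  have : α + 1 / 2 ≠ 0 := by contrapose! hα'; linarith
  have : 1 - t ≠ 0 := right_ne_zero_of_mul hx0
  field_simp
  ring

end ClosedForm

/-- Closed form for `₂F₁(α, α+1/2, 2α+2; z)` on `0 < z < 1`: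
with `g(z) = 1/2 + (1/2)√(1-z)` and `p(z) = -(α+1/2)(1-z) + α√(1-z) + 1/2`,
`₂F₁(α, α+1/2, 2α+2; z) = (2α+1) g(z)^{-2α} p(z) / ((α+1)(α+1/2) z)`. -/
theorem hypergeom_closed_form_once_diff (α z : ℝ) (hα : 0 < α) (hz0 : 0 < z) (hz1 : z < 1) :
    HasSum
      (fun n : ℕ =>
        poch α n * poch (α + 1/2) n / (poch (2*α + 2) n * n.factorial) * z ^ n)
      ((2*α + 1) * (1/2 + (1/2) * Real.sqrt (1 - z)) ^ (-(2*α)) *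
          (-(α + 1/2) * (1 - z) + α * Real.sqrt (1 - z) + 1/2) /
        ((α + 1) * (α + 1/2) * z)) := by
  have habc :
      ∀ k : ℕ, (k : ℝ) ≠ -α ∧ (k : ℝ) ≠ -(α + 1 / 2) ∧ (k : ℝ) ≠ -(2 * α + 2) := by
    intro k
    have hk := k.cast_nonneg (α := ℝ)
    refine ⟨?_, ?_, ?_⟩ <;> intro h <;> linarith
  have hp := convOnUnitBall_ordinaryHypergeometricCoefficient habc
  have hF := hp.isHypergeomSolution (ordinaryHypergeometricCoefficient_succ fun k => (habc k).2.2)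
  have hu := isHypergeomSolution_closedForm (α := α) (by linarith)
  have hFu := hF.eq_of_apply_zero_eq (by linarith) hu
    (fun x hx => (closedForm_pos (by linarith) hx.2).ne')
    (by rw [powerSeriesSum_zero, closedForm_zero (by linarith)]
        simp [ordinaryHypergeometricCoefficient_eq_poch, poch]) ⟨hz0.le, hz1⟩
  have hsum := hp.hasSum (abs_lt.2 ⟨by linarith, hz1⟩)
  rw [hFu, closedForm_eq (by linarith) (by linarith) hz0.ne' hz1.le] at hsum
  simp only [ordinaryHypergeometricCoefficient_eq_poch] at hsum
  exact hsum
end
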